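/- Let X be a topological space and A ⊆ X a dense subspace. Suppose A is locally path-connected relative to X, meaning: for every x ∈ X and every neighborhood U of x there is a neighborhood V ⊆ U of x such that any two points of A ∩ V can be joined by a path in A ∩ U. Then any two points of A that lie in the same path component of X lie in the same path component of A. -/
import Mathlib


/-- Eilenberg–Wilder, case p = 0: if `A` is a dense subset of `X` which is
locally path-connected relative to `X` (0-LC rel. X), then any two points of `A`
that are joined by a path in `X` are joined by a path in `A`. -/
theorem stmt_8 {X : Type*} [TopologicalSpace X] (A : Set X) (hdense : Dense A)
    (hLC : ∀ x : X, ∀ U ∈ nhds x, ∃ V ∈ nhds x, V ⊆ U ∧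
      ∀ a ∈ A ∩ V, ∀ b ∈ A ∩ V, JoinedIn (A ∩ U) a b)
    (a b : X) (ha : a ∈ A) (hb : b ∈ A) (hjoin : Joined a b) :
    JoinedIn A a b := by
  classical
  have h : ∀ x : X, ∃ W : Set X, IsOpen W ∧ x ∈ W ∧
      ∀ c ∈ A ∩ W, ∀ d ∈ A ∩ W, JoinedIn A c d := by
    intro x
    obtain ⟨V, hVnhds, -, hV⟩ := hLC x Set.univ Filter.univ_mem
    refine ⟨interior V, isOpen_interior, mem_interior_iff_mem_nhds.2 hVnhds, ?_⟩
    intro c hc d hd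
    have := hV c ⟨hc.1, interior_subset hc.2⟩ d ⟨hd.1, interior_subset hd.2⟩
    simpa using this
  choose W hWo hWx hWj using h
  obtain ⟨γ⟩ := hjoin
  set T : Set unitInterval := {t | ∃ c ∈ A ∩ W (γ t), JoinedIn A a c} with hT
  have key : ∀ t s : unitInterval, γ s ∈ W (γ t) → t ∈ T → s ∈ T := by
    rintro t s hmem ⟨c, hc, hjc⟩
    have hopen : IsOpen (W (γ t) ∩ W (γ s)) := (hWo _).inter (hWo _)
    have hne : (W (γ t) ∩ W (γ s)).Nonempty := ⟨γ s, hmem, hWx _⟩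
    obtain ⟨c', ⟨hc't, hc's⟩, hc'A⟩ := hdense.inter_open_nonempty _ hopen hne
    exact ⟨c', ⟨hc'A, hc's⟩, hjc.trans (hWj (γ t) c hc c' ⟨hc'A, hc't⟩)⟩
  have key2 : ∀ t s : unitInterval, γ s ∈ W (γ t) → s ∈ T → t ∈ T := by
    rintro t s hmem ⟨c, hc, hjc⟩
    have hopen : IsOpen (W (γ t) ∩ W (γ s)) := (hWo _).inter (hWo _)
    have hne : (W (γ t) ∩ W (γ s)).Nonempty := ⟨γ s, hmem, hWx _⟩
    obtain ⟨c', ⟨hc't, hc's⟩, hc'A⟩ := hdense.inter_open_nonempty _ hopen hne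
    exact ⟨c', ⟨hc'A, hc't⟩, hjc.trans (hWj (γ s) c hc c' ⟨hc'A, hc's⟩)⟩
  have hTopen : IsOpen T := by
    rw [isOpen_iff_mem_nhds]
    intro t ht
    have hpre : γ ⁻¹' (W (γ t)) ∈ nhds t :=
      ((hWo (γ t)).preimage γ.continuous).mem_nhds (hWx (γ t))
    exact Filter.mem_of_superset hpre fun s hs => key t s hs ht
  have hTclosed : IsClosed T := by
    rw [← closure_subset_iff_isClosed]
    intro t ht
    have hpre : γ ⁻¹' (W (γ t)) ∈ nhds t :=
      ((hWo (γ t)).preimage γ.continuous).mem_nhds (hWx (γ t))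
    obtain ⟨s, hs, hsT⟩ := mem_closure_iff_nhds.1 ht _ hpre
    exact key2 t s hs hsT
  have h0 : (0 : unitInterval) ∈ T := by
    refine ⟨a, ⟨ha, ?_⟩, JoinedIn.refl ha⟩
    rw [γ.source]; exact hWx a
  have hTuniv : T = Set.univ :=
    IsClopen.eq_univ (s := T) ⟨hTclosed, hTopen⟩ ⟨0, h0⟩
  have h1 : (1 : unitInterval) ∈ T := hTuniv ▸ Set.mem_univ _
  obtain ⟨c, hc, hjc⟩ := h1
  rw [γ.target] at hc
  have : JoinedIn A c b := hWj b c hc b ⟨hb, hWx b⟩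
  exact hjc.trans this
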